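/- arXiv:2507.10168 — 2 statements merged into one kernel-verified Lean document; each statement's English description precedes it below -/
import Mathlib

section
/- Let S be a left cancellative monoid and let X ∈ J(S) be a nonempty constructible right ideal. Then X is not contained in any finite union ⋃_{j=1}^n (X^j ∖ (X^j_1 ∪ ⋯ ∪ X^j_{m_j})) in which all X^j, X^j_i ∈ J(S) and, for each j, the family {X^j_1, …, X^j_{m_j}} is a foundation set for X^j. -/
open scoped Classical

namespace SgC

variable {M : Type*}

/-- Composition of partial maps (`g` after `f`). -/
def pcomp (g f : M → Option M) : M → Option M := fun s => (f s).bind g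

/-- The canonical partial inverse of a partial map (the genuine inverse when the map
is injective on its domain, as is the case for all maps in the left inverse hull of a
left cancellative monoid). -/
noncomputable def pinv (f : M → Option M) : M → Option M :=
  fun t => if h : ∃ s, f s = some t then some h.choose else none

/-- Left translation `t ↦ s * t` as an everywhere-defined partial map. -/
def ptransl [Mul M] (s : M) : M → Option M := fun t => some (s * t)

/-- The identity partial map. -/
def pid : M → Option M := fun s => some s

/-- The block `q⁻¹ ∘ p`: first multiply on the left by `p`, then remove `q` on the left. -/
noncomputable def pblock [Mul M] (p : M × M) : M → Option M :=
  pcomp (pinv (ptransl p.2)) (ptransl p.1)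

/-- Membership in the left inverse hull `I_ℓ(M)`: `h` is of the form
`s₂ₙ⁻¹ s₂ₙ₋₁ ⋯ s₂⁻¹ s₁` for some `n ≥ 1` and `sᵢ ∈ M` (the list records the pairs
`(s₁,s₂), (s₃,s₄), …`, applied left to right). -/
def InInvHull [Mul M] (h : M → Option M) : Prop :=
  ∃ l : List (M × M), l ≠ [] ∧
    h = l.foldl (fun acc p => pcomp (pblock p) acc) pid

/-- Membership in the inverse hull generated by translations by elements of `σ` only
(used for canonical copies of `I_ℓ(S)` inside partial maps of a larger monoid). -/
def InInvHullOn [Mul M] (σ : Set M) (h : M → Option M) : Prop :=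
  ∃ l : List (M × M), l ≠ [] ∧ (∀ p ∈ l, p.1 ∈ σ ∧ p.2 ∈ σ) ∧
    h = l.foldl (fun acc p => pcomp (pblock p) acc) pid

/-- Domain of a partial map. -/
def pdom (h : M → Option M) : Set M := {s | h s ≠ none}

/-- `h` fixes the set `Y` pointwise (in particular `Y ⊆ dom h`). -/
def PFixes (h : M → Option M) (Y : Set M) : Prop := ∀ s ∈ Y, h s = some s

/-- Preimage of a set under a partial map. -/
def ppre (h : M → Option M) (X : Set M) : Set M := {s | ∃ x ∈ X, h s = some x}

/-- Constructible right ideals: domains of elements of the left inverse hull. -/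
def IsConstructible [Mul M] (X : Set M) : Prop := ∃ h, InInvHull h ∧ X = pdom h

/-- Membership in `J̄(S)`: sets of the form `X₀` or `X₀ ∖ (X₁ ∪ ⋯ ∪ Xₘ)` with all
`Xᵢ` constructible. -/
def IsConstructibleBar [Mul M] (X : Set M) : Prop :=
  ∃ (X₀ : Set M) (m : ℕ) (Xi : Fin m → Set M),
    IsConstructible X₀ ∧ (∀ i, IsConstructible (Xi i)) ∧ X = X₀ \ ⋃ i, Xi i

/-- `Xi` is a foundation family for `X`: each `Xi i ⊆ X` and every nonempty
constructible right ideal contained in `X` intersects some `Xi i`. -/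
def IsFoundation [Mul M] (X : Set M) {ι : Type*} (Xi : ι → Set M) : Prop :=
  (∀ i, Xi i ⊆ X) ∧
  ∀ Y : Set M, IsConstructible Y → Y.Nonempty → Y ⊆ X → ∃ i, (Y ∩ Xi i).Nonempty

/-- Strong C*-regularity. -/
def StronglyRegular (M : Type*) [Monoid M] : Prop :=
  ∀ (n : ℕ) (h : Fin n → M → Option M), (∀ k, InInvHull (h k)) →
  ∀ (m : ℕ) (X : Set M) (Xi : Fin m → Set M),
    IsConstructible X → (∀ i, IsConstructible (Xi i)) →
    (X \ ⋃ i, Xi i).Nonempty →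
    (X \ ⋃ i, Xi i) ⊆ ⋃ k, {s | h k s = some s} →
    ∃ (l : ℕ) (Y : Fin l → Set M) (kk : Fin l → Fin n),
      (∀ j, IsConstructible (Y j)) ∧
      (X \ ⋃ i, Xi i) ⊆ ⋃ j, Y j ∧
      ∀ j, PFixes (h (kk j)) (Y j)

/-- C*-regularity. -/
def Regular (M : Type*) [Monoid M] : Prop :=
  ∀ (n : ℕ) (h : Fin n → M → Option M), (∀ k, InInvHull (h k)) →
  ∀ X : Set M, IsConstructibleBar X → X.Nonempty →
    X ⊆ ⋃ k, {s | h k s = some s} →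
    ∃ (l : ℕ) (Y : Fin l → Set M) (kk : Fin l → Fin n),
      (∀ j, IsConstructibleBar (Y j)) ∧ X ⊆ ⋃ j, Y j ∧
      ∀ j, PFixes (h (kk j)) (Y j)

/-- Strong C*-regularity on the boundary. -/
def StronglyRegularOnBoundary (M : Type*) [Monoid M] : Prop :=
  ∀ (n : ℕ) (h : Fin n → M → Option M), (∀ k, InInvHull (h k)) →
  ∀ (m : ℕ) (X : Set M) (Xi : Fin m → Set M),
    IsConstructible X → (∀ i, IsConstructible (Xi i)) → (∀ i, Xi i ⊆ X) →
    (X \ ⋃ i, Xi i).Nonempty →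
    (X \ ⋃ i, Xi i) ⊆ ⋃ k, {s | h k s = some s} →
    ∃ (l : ℕ) (Y : Fin l → Set M) (kk : Fin l → Fin n),
      (∀ j, IsConstructible (Y j)) ∧ (∀ j, PFixes (h (kk j)) (Y j)) ∧
      IsFoundation X (Sum.elim Xi Y)

/-- C*-regularity on the boundary. -/
def RegularOnBoundary (M : Type*) [Monoid M] : Prop :=
  ∀ (n : ℕ) (h : Fin n → M → Option M), (∀ k, InInvHull (h k)) →
  ∀ (m : ℕ) (X : Set M) (Xi : Fin m → Set M),
    IsConstructible X → (∀ i, IsConstructible (Xi i)) → (∀ i, Xi i ⊆ X) →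
    (X \ ⋃ i, Xi i).Nonempty →
    (X \ ⋃ i, Xi i) ⊆ ⋃ k, {s | h k s = some s} →
    ∃ (l : ℕ) (Y : Fin l → Set M) (kk : Fin l → Fin n),
      (∀ j, IsConstructibleBar (Y j)) ∧ (∀ j, PFixes (h (kk j)) (Y j)) ∧
      IsFoundation X (Sum.elim Xi Y)

/-- The type of constructible right ideals `J(M)`. -/
def CIdeal (M : Type*) [Mul M] : Type _ := {X : Set M // IsConstructible X}

/-- The character space `{0,1}^{J(M)}` with the topology of pointwise convergence. -/
abbrev CharSpace (M : Type*) [Mul M] : Type _ := CIdeal M → Bool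

/-- The principal character `χ_s`. -/
noncomputable def princhar [Mul M] (s : M) : CharSpace M :=
  fun X => decide (s ∈ X.1)

/-- `Ω(M)`: the closure of the set of principal characters. -/
noncomputable def Omega (M : Type*) [Mul M] : Set (CharSpace M) :=
  closure (Set.range (princhar : M → CharSpace M))

/-- Filters on `J(M)`: nonempty collections of nonempty constructible ideals closed
under intersections and enlargements within `J(M)`. -/
def IsFilterOn [Mul M] (F : Set (CIdeal M)) : Prop :=
  F.Nonempty ∧ (∀ X ∈ F, (X.1 : Set M).Nonempty) ∧
  (∀ X ∈ F, ∀ Y ∈ F, ∀ Z : CIdeal M, Z.1 = X.1 ∩ Y.1 → Z ∈ F) ∧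
  (∀ X ∈ F, ∀ Y : CIdeal M, X.1 ⊆ Y.1 → Y ∈ F)

/-- Nonzero multiplicative `{0,1}`-valued maps on `J(M)`. -/
def IsChar [Mul M] (χ : CharSpace M) : Prop :=
  (∃ X, χ X = true) ∧
  ∀ X Y Z : CIdeal M, Z.1 = X.1 ∩ Y.1 → χ Z = (χ X && χ Y)

/-- Maximal characters: characters whose associated filter is maximal among filters. -/
def IsMaximalChar [Mul M] (χ : CharSpace M) : Prop :=
  IsChar χ ∧ IsFilterOn {X | χ X = true} ∧
  ∀ G : Set (CIdeal M), IsFilterOn G → {X | χ X = true} ⊆ G → G = {X | χ X = true}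

/-- The set of maximal characters `Ω_max(M)`. -/
def OmegaMax (M : Type*) [Mul M] : Set (CharSpace M) := {χ | IsMaximalChar χ}

/-- The boundary `∂Ω(M)`: the closure of the set of maximal characters. -/
noncomputable def BoundaryOmega (M : Type*) [Mul M] : Set (CharSpace M) :=
  closure (OmegaMax M)

/-! Constructible ideals are right ideals, and every principal right ideal `y M` is
constructible. Hence a difference `Xs ∖ ⋃ i, Xi i` with `{Xi i}` a foundation set for `Xs` is
nowhere dense for the topology generated by principal right ideals; a finite union of nowhere
dense sets is nowhere dense, and a nonempty right ideal, being open, is not. -/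

section RightIdeal

def IsRightMulEquivariant [Mul M] (h : M → Option M) : Prop :=
  ∀ ⦃s u : M⦄, h s = some u → ∀ t, h (s * t) = some (u * t)

lemma mul_pinv_ptransl [Mul M] {q t u : M} (h : pinv (ptransl q) t = some u) : q * u = t := by
  unfold pinv at h
  split_ifs at h with hex
  cases h
  simpa [ptransl] using hex.choose_spec

lemma isRightMulEquivariant_pid [Mul M] : IsRightMulEquivariant (pid : M → Option M) := by
  intro s u h t
  cases h
  rfl

lemma IsRightMulEquivariant.pcomp [Mul M] {g f : M → Option M} (hg : IsRightMulEquivariant g)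
    (hf : IsRightMulEquivariant f) : IsRightMulEquivariant (pcomp g f) := by
  intro s u h t
  obtain ⟨v, hv, hgv⟩ := Option.bind_eq_some_iff.mp h
  show (f (s * t)).bind g = _
  rw [hf hv t, Option.bind_some, hg hgv t]

variable [Semigroup M] [IsLeftCancelMul M]

lemma pinv_ptransl_mul (q t : M) : pinv (ptransl q) (q * t) = some t := by
  have hex : ∃ s, ptransl q s = some (q * t) := ⟨t, rfl⟩
  rw [pinv, dif_pos hex]
  exact congrArg some (mul_left_cancel (Option.some.inj hex.choose_spec))

lemma isRightMulEquivariant_pblock (p : M × M) : IsRightMulEquivariant (pblock p) := by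
  intro s u h t
  have hu : p.2 * u = p.1 * s := mul_pinv_ptransl h
  show pinv (ptransl p.2) (p.1 * (s * t)) = some (u * t)
  rw [← mul_assoc, ← hu, mul_assoc, pinv_ptransl_mul]

lemma InInvHull.isRightMulEquivariant {h : M → Option M} (hh : InInvHull h) :
    IsRightMulEquivariant h := by
  obtain ⟨l, -, rfl⟩ := hh
  suffices ∀ acc : M → Option M, IsRightMulEquivariant acc →
      IsRightMulEquivariant (l.foldl (fun acc p => pcomp (pblock p) acc) acc) from
    this pid isRightMulEquivariant_pid
  induction l with
  | nil => exact fun _ hacc => hacc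
  | cons p l ih => exact fun acc hacc => ih _ ((isRightMulEquivariant_pblock p).pcomp hacc)

lemma IsConstructible.mul_mem {X : Set M} (hX : IsConstructible X) {s : M} (hs : s ∈ X)
    (t : M) : s * t ∈ X := by
  obtain ⟨h, hh, rfl⟩ := hX
  obtain ⟨u, hu⟩ := Option.ne_none_iff_exists'.mp hs
  simp [pdom, hh.isRightMulEquivariant hu t]

end RightIdeal

lemma isConstructible_range_mul [Monoid M] (y : M) : IsConstructible (Set.range (y * ·)) := by
  refine ⟨pblock (1, y), ⟨[(1, y)], List.cons_ne_nil _ _, rfl⟩, ?_⟩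
  ext s
  simp [pdom, pblock, pcomp, ptransl, pinv]

def IsRightNowhereDense [Mul M] (D : Set M) : Prop :=
  ∀ y : M, ∃ t : M, ∀ u : M, y * t * u ∉ D

lemma isRightNowhereDense_empty [Mul M] : IsRightNowhereDense (∅ : Set M) :=
  fun y => ⟨y, fun _ h => h⟩

section NowhereDense

variable [Semigroup M]

lemma IsRightNowhereDense.union {D₁ D₂ : Set M} (h₁ : IsRightNowhereDense D₁)
    (h₂ : IsRightNowhereDense D₂) : IsRightNowhereDense (D₁ ∪ D₂) := by
  intro y
  obtain ⟨t₁, ht₁⟩ := h₁ y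
  obtain ⟨t₂, ht₂⟩ := h₂ (y * t₁)
  refine ⟨t₁ * t₂, fun u hu => hu.elim ?_ ?_⟩
  · simpa only [mul_assoc] using ht₁ (t₂ * u)
  · simpa only [mul_assoc] using ht₂ u

lemma IsRightNowhereDense.biUnion {ι : Type*} {s : Finset ι} {D : ι → Set M}
    (h : ∀ j ∈ s, IsRightNowhereDense (D j)) : IsRightNowhereDense (⋃ j ∈ s, D j) := by
  induction s using Finset.induction_on with
  | empty => simpa using isRightNowhereDense_empty
  | insert j s _ ih =>
    rw [Finset.set_biUnion_insert]
    exact (h j (Finset.mem_insert_self j s)).union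
      (ih fun k hk => h k (Finset.mem_insert_of_mem hk))

lemma IsRightNowhereDense.iUnion {ι : Type*} [Finite ι] {D : ι → Set M}
    (h : ∀ j, IsRightNowhereDense (D j)) : IsRightNowhereDense (⋃ j, D j) := by
  have := Fintype.ofFinite ι
  simpa using IsRightNowhereDense.biUnion (s := Finset.univ) fun j _ => h j

end NowhereDense

section Foundation

variable [Monoid M] [IsLeftCancelMul M]

/- Either `y M` misses `Xs`, or `y u ∈ Xs`; then `y u M` is a nonempty constructible ideal
inside `Xs`, so it meets some `Xi i`, and every right multiple of that point stays in `Xi i`. -/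
lemma IsFoundation.isRightNowhereDense_diff {ι : Type*} {Xs : Set M} {Xi : ι → Set M}
    (hfound : IsFoundation Xs Xi) (hXs : IsConstructible Xs)
    (hXi : ∀ i, IsConstructible (Xi i)) : IsRightNowhereDense (Xs \ ⋃ i, Xi i) := by
  intro y
  by_cases hmeet : ∃ u, y * u ∈ Xs
  · obtain ⟨u, hu⟩ := hmeet
    have hsub : Set.range (y * u * ·) ⊆ Xs := Set.range_subset_iff.mpr (hXs.mul_mem hu)
    obtain ⟨i, -, ⟨v, rfl⟩, hv⟩ :=
      hfound.2 _ (isConstructible_range_mul (y * u)) (Set.range_nonempty _) hsub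
    refine ⟨u * v, fun w hw => hw.2 (Set.mem_iUnion.mpr ⟨i, ?_⟩)⟩
    simpa only [mul_assoc] using (hXi i).mul_mem hv w
  · exact ⟨1, fun u hu => hmeet ⟨1 * u, by simpa only [mul_assoc] using hu.1⟩⟩

lemma IsConstructible.not_subset_of_isRightNowhereDense {X D : Set M} (hX : IsConstructible X)
    (hXne : X.Nonempty) (hD : IsRightNowhereDense D) : ¬ X ⊆ D := by
  obtain ⟨x, hx⟩ := hXne
  obtain ⟨t, ht⟩ := hD x
  exact fun hXD => ht 1 (by rw [mul_one]; exact hXD (hX.mul_mem hx t))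

end Foundation

theorem cstar_stmt0_general {M : Type*} [Monoid M] [IsLeftCancelMul M]
    (X : Set M) (hX : IsConstructible X) (hXne : X.Nonempty)
    (n : ℕ) (Xs : Fin n → Set M) (ms : Fin n → ℕ)
    (Xi : (j : Fin n) → Fin (ms j) → Set M)
    (hXs : ∀ j, IsConstructible (Xs j))
    (hXi : ∀ j i, IsConstructible (Xi j i))
    (hfound : ∀ j, IsFoundation (Xs j) (Xi j)) :
    ¬ X ⊆ ⋃ j, (Xs j \ ⋃ i, Xi j i) :=
  hX.not_subset_of_isRightNowhereDense hXne
    (IsRightNowhereDense.iUnion fun j => (hfound j).isRightNowhereDense_diff (hXs j) (hXi j))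

/-- A nonempty constructible right ideal `X` of a left cancellative
monoid is not contained in a finite union of differences `Xs j ∖ (⋃ i, Xi j i)` in which
all the sets are constructible right ideals and, for each `j`, the family
`{Xi j i}` is a foundation set for `Xs j`. -/
theorem cstar_stmt0 {M : Type*} [Monoid M] [IsLeftCancelMul M]
    (X : Set M) (hX : IsConstructible X) (hXne : X.Nonempty)
    (n : ℕ) (Xs : Fin n → Set M) (ms : Fin n → ℕ) (hms : ∀ j, 1 ≤ ms j)
    (Xi : (j : Fin n) → Fin (ms j) → Set M)
    (hXs : ∀ j, IsConstructible (Xs j))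
    (hXi : ∀ j i, IsConstructible (Xi j i))
    (hfound : ∀ j, IsFoundation (Xs j) (Xi j)) :
    ¬ X ⊆ ⋃ j, (Xs j \ ⋃ i, Xi j i) :=
  cstar_stmt0_general X hX hXne n Xs ms Xi hXs hXi hfound

end SgC
end

section
/- Let S be a left cancellative monoid and X, X_1, …, X_m ∈ J(S) (m ≥ 1) with X_i ⊆ X for all i. Then the set U = {η ∈ Ω(S) : η(X) = 1 and η(X_i) = 0 for i = 1,…,m} is disjoint from ∂Ω(S) if and only if {X_1, …, X_m} is a foundation set for X. -/
open scoped Classical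

namespace SgC

variable {M : Type*}

/-!
If a nonempty constructible ideal `Y ⊆ X` misses every `Xᵢ`, the principal filter of `Y`
extends (Zorn) to a maximal filter, whose indicator is a maximal character lying in `U`.
Conversely, maximality of the filter of a maximal character `χ` with `χ(X) = 1`,
`χ(Xᵢ) = 0` provides members `Wᵢ` of the filter disjoint from `Xᵢ`, and
`X ∩ W₁ ∩ ⋯ ∩ Wₘ` is then a nonempty constructible ideal inside `X` missing every `Xᵢ`.
Since the conditions defining `U` involve finitely many coordinates, `U` is open, so missing
`Ω_max(S)` means missing its closure. The same disjoint witnesses show that finitely many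
values of a maximal character are those of some `χ_s`, whence `Ω_max(S) ⊆ Ω(S)`.
-/

lemma pcomp_pid_left (f : M → Option M) : pcomp pid f = f := by
  funext s; unfold pcomp pid; cases f s <;> rfl

lemma pcomp_assoc (h g f : M → Option M) :
    pcomp h (pcomp g f) = pcomp (pcomp h g) f := by
  funext s; unfold pcomp; cases f s <;> rfl

section InverseHull

variable [Mul M]

noncomputable def pfold (l : List (M × M)) : M → Option M :=
  l.foldl (fun acc p => pcomp (pblock p) acc) pid

lemma foldl_pblock_eq_pcomp (l : List (M × M)) (h : M → Option M) :
    l.foldl (fun acc p => pcomp (pblock p) acc) h = pcomp (pfold l) h := by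
  induction l generalizing h with
  | nil => simp [pfold, pcomp_pid_left]
  | cons q l ih =>
    change l.foldl _ (pcomp (pblock q) h) = pcomp (l.foldl _ (pcomp (pblock q) pid)) h
    rw [ih, ih (pcomp (pblock q) pid), ← pcomp_assoc]
    rfl

lemma pfold_append (l l' : List (M × M)) :
    pfold (l ++ l') = pcomp (pfold l') (pfold l) := by
  rw [pfold, List.foldl_append, foldl_pblock_eq_pcomp]; rfl

lemma pfold_cons (q : M × M) (l : List (M × M)) :
    pfold (q :: l) = pcomp (pfold l) (pblock q) :=
  pfold_append [q] l

/-- The word of the inverse partial bijection: reversed, with each block `q⁻¹ p` turned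
into `p⁻¹ q`. -/
def pswap (l : List (M × M)) : List (M × M) := (l.map Prod.swap).reverse

variable [IsLeftCancelMul M]

lemma pblock_eq_some_iff {p : M × M} {s t : M} :
    pblock p s = some t ↔ p.2 * t = p.1 * s := by
  change pinv (ptransl p.2) (p.1 * s) = some t ↔ _
  unfold pinv ptransl
  split_ifs with h
  · have hs : p.2 * h.choose = p.1 * s := Option.some_inj.mp h.choose_spec
    rw [Option.some_inj]
    exact ⟨fun ht => ht ▸ hs, fun ht => mul_left_cancel (hs.trans ht.symm)⟩
  · exact ⟨fun ht => ht.elim, fun ht => absurd ⟨t, by rw [ht]⟩ h⟩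

lemma pfold_pswap_eq_some {l : List (M × M)} {s t : M} (h : pfold l s = some t) :
    pfold (pswap l) t = some s := by
  induction l generalizing s t with
  | nil => simpa [pfold, pid, pswap] using h.symm
  | cons q l ih =>
    rw [pfold_cons] at h
    obtain ⟨u, hu, hl⟩ := Option.bind_eq_some_iff.mp h
    have hq : pblock q.swap u = some s :=
      pblock_eq_some_iff.mpr (pblock_eq_some_iff.mp hu).symm
    rw [show pswap (q :: l) = pswap l ++ [q.swap] by simp [pswap], pfold_append]
    simp only [pcomp, ih hl, Option.bind_some, pfold_cons, hq]
    rfl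

lemma isConstructible_inter {X Y : Set M} (hX : IsConstructible X)
    (hY : IsConstructible Y) : IsConstructible (X ∩ Y) := by
  obtain ⟨_, ⟨l, hl, rfl⟩, rfl⟩ := hX
  obtain ⟨_, ⟨l', -, rfl⟩, rfl⟩ := hY
  -- `dom h ∩ dom g = dom (g h⁻¹ h)`
  refine ⟨pfold (l ++ (pswap l ++ l')), ⟨_, by simp [hl], rfl⟩, ?_⟩
  ext s
  change pfold l s ≠ none ∧ pfold l' s ≠ none ↔ pfold (l ++ (pswap l ++ l')) s ≠ none
  rw [pfold_append, pfold_append]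
  cases hs : pfold l s with
  | none => simp [pcomp, hs]
  | some t => simp [pcomp, hs, pfold_pswap_eq_some hs]

instance : Inter (CIdeal M) := ⟨fun X Y => ⟨X.1 ∩ Y.1, isConstructible_inter X.2 Y.2⟩⟩

end InverseHull

section Filters

variable [Mul M] {F : Set (CIdeal M)}

lemma isFilterOn_principal {Y : CIdeal M} (hY : Y.1.Nonempty) :
    IsFilterOn {Z : CIdeal M | Y.1 ⊆ Z.1} :=
  ⟨⟨Y, show Y.1 ⊆ Y.1 from subset_rfl⟩, fun _ hZ => hY.mono hZ,
    fun _ hA _ hB _ hZ => (Set.subset_inter hA hB).trans hZ.symm.subset,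
    fun _ hA _ hAB => hA.trans hAB⟩

lemma isFilterOn_sUnion {c : Set (Set (CIdeal M))} (hc : ∀ G ∈ c, IsFilterOn G)
    (hchain : IsChain (· ⊆ ·) c) (hne : c.Nonempty) : IsFilterOn (⋃₀ c) := by
  obtain ⟨G, hG⟩ := hne
  refine ⟨(hc G hG).1.mono (Set.subset_sUnion_of_mem hG), ?_, ?_, ?_⟩
  · rintro X ⟨G', hG', hX⟩
    exact (hc G' hG').2.1 X hX
  · rintro X ⟨G₁, h₁, hX⟩ Y ⟨G₂, h₂, hY⟩ Z hZ
    rcases hchain.total h₁ h₂ with h | h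
    · exact ⟨G₂, h₂, (hc G₂ h₂).2.2.1 X (h hX) Y hY Z hZ⟩
    · exact ⟨G₁, h₁, (hc G₁ h₁).2.2.1 X hX Y (h hY) Z hZ⟩
  · rintro X ⟨G', hG', hX⟩ Y hY
    exact ⟨G', hG', (hc G' hG').2.2.2 X hX Y hY⟩

lemma IsFilterOn.exists_maximal (hF : IsFilterOn F) :
    ∃ G, F ⊆ G ∧ Maximal IsFilterOn G :=
  zorn_subset_nonempty {G | IsFilterOn G}
    (fun c hc hchain hne => ⟨⋃₀ c, isFilterOn_sUnion hc hchain hne,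
      fun _ => Set.subset_sUnion_of_mem⟩) F hF

lemma IsMaximalChar.maximal {χ : CharSpace M} (hχ : IsMaximalChar χ) :
    Maximal IsFilterOn {X | χ X = true} :=
  ⟨hχ.2.1, fun G hG hle => (hχ.2.2 G hG hle).le⟩

noncomputable def filterChar (F : Set (CIdeal M)) : CharSpace M := fun Z => decide (Z ∈ F)

lemma isMaximalChar_filterChar (hF : Maximal IsFilterOn F) :
    IsMaximalChar (filterChar F) := by
  have hset : {X | filterChar F X = true} = F := by ext; simp [filterChar]
  refine ⟨⟨?_, fun A B Z hZ => ?_⟩, by rw [hset]; exact hF.1, fun G hG hle => ?_⟩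
  · obtain ⟨Z, hZ⟩ := hF.1.1
    exact ⟨Z, decide_eq_true hZ⟩
  · rw [Bool.eq_iff_iff]
    simp only [filterChar, Bool.and_eq_true, decide_eq_true_eq]
    refine ⟨fun h => ⟨?_, ?_⟩, fun h => hF.1.2.2.1 A h.1 B h.2 Z hZ⟩
    · exact hF.1.2.2.2 Z h A (hZ ▸ Set.inter_subset_left)
    · exact hF.1.2.2.2 Z h B (hZ ▸ Set.inter_subset_right)
  · rw [hset] at hle ⊢
    exact (hF.2 hG hle).antisymm hle

variable [IsLeftCancelMul M]

lemma IsFilterOn.inter_mem (hF : IsFilterOn F) {X Y : CIdeal M} (hX : X ∈ F) (hY : Y ∈ F) :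
    X ∩ Y ∈ F :=
  hF.2.2.1 X hX Y hY _ rfl

lemma IsFilterOn.exists_subset_of_finite (hF : IsFilterOn F) {ι : Type*} [Finite ι]
    {W₀ : CIdeal M} (hW₀ : W₀ ∈ F) (g : ι → CIdeal M) (hg : ∀ i, g i ∈ F) :
    ∃ W ∈ F, W.1 ⊆ W₀.1 ∧ ∀ i, W.1 ⊆ (g i).1 := by
  have := Fintype.ofFinite ι
  suffices ∀ s : Finset ι, ∃ W ∈ F, W.1 ⊆ W₀.1 ∧ ∀ i ∈ s, W.1 ⊆ (g i).1 by
    simpa using this Finset.univ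
  intro s
  induction s using Finset.induction_on with
  | empty => exact ⟨W₀, hW₀, subset_rfl, by simp⟩
  | insert a s _ ih =>
    obtain ⟨W, hWF, hW₀, hWg⟩ := ih
    refine ⟨W ∩ g a, hF.inter_mem hWF (hg a), Set.inter_subset_left.trans hW₀, ?_⟩
    simp only [Finset.mem_insert, forall_eq_or_imp]
    exact ⟨Set.inter_subset_right, fun i hi => Set.inter_subset_left.trans (hWg i hi)⟩

lemma exists_mem_inter_eq_empty_of_notMem (hF : Maximal IsFilterOn F) {Z : CIdeal M}
    (hZ : Z ∉ F) : ∃ W ∈ F, W.1 ∩ Z.1 = ∅ := by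
  by_contra! hmeet
  -- otherwise the traces of `F` on `Z` generate a filter containing `F` and `Z`
  let G : Set (CIdeal M) := {V | ∃ W ∈ F, W.1 ∩ Z.1 ⊆ V.1}
  have hG : IsFilterOn G := by
    refine ⟨⟨Z, hF.1.1.some, hF.1.1.some_mem, Set.inter_subset_right⟩, ?_, ?_, ?_⟩
    · rintro V ⟨W, hW, hWV⟩
      exact (hmeet W hW).mono hWV
    · rintro V₁ ⟨W₁, hW₁, h₁⟩ V₂ ⟨W₂, hW₂, h₂⟩ V hV
      refine ⟨W₁ ∩ W₂, hF.1.inter_mem hW₁ hW₂, ?_⟩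
      rw [hV]
      exact fun x hx => ⟨h₁ ⟨hx.1.1, hx.2⟩, h₂ ⟨hx.1.2, hx.2⟩⟩
    · rintro V₁ ⟨W, hW, hWV⟩ V₂ hV
      exact ⟨W, hW, hWV.trans hV⟩
  exact hZ (hF.2 hG (fun W hW => ⟨W, hW, Set.inter_subset_left⟩)
    ⟨hF.1.1.some, hF.1.1.some_mem, Set.inter_subset_right⟩)

end Filters

section Characters

variable [Mul M] [IsLeftCancelMul M]

lemma IsMaximalChar.exists_princhar_eqOn {χ : CharSpace M} (hχ : IsMaximalChar χ)
    {I : Set (CIdeal M)} (hI : I.Finite) : ∃ s, ∀ Z ∈ I, princhar s Z = χ Z := by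
  have hF := hχ.maximal
  have hwit : ∀ Z : CIdeal M, ∃ W ∈ {X | χ X = true}, ∀ s ∈ W.1, princhar s Z = χ Z := by
    intro Z
    cases hZ : χ Z with
    | true => exact ⟨Z, hZ, fun s hs => decide_eq_true hs⟩
    | false =>
      obtain ⟨W, hW, hWZ⟩ := exists_mem_inter_eq_empty_of_notMem hF (Z := Z) (by simp [hZ])
      exact ⟨W, hW, fun s hs => decide_eq_false fun hsZ => hWZ.subset ⟨hs, hsZ⟩⟩
  choose W hWF hW using hwit
  have := hI.to_subtype
  obtain ⟨V, hVF, -, hVW⟩ :=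
    hF.1.exists_subset_of_finite hF.1.1.some_mem (fun Z : I => W Z) (fun Z => hWF Z)
  obtain ⟨s, hs⟩ := hF.1.2.1 V hVF
  exact ⟨s, fun Z hZ => hW Z s (hVW ⟨Z, hZ⟩ hs)⟩

lemma omegaMax_subset_omega : OmegaMax M ⊆ Omega M := by
  intro χ hχ
  rw [Omega, mem_closure_iff_nhds]
  intro U hU
  rw [nhds_pi, Filter.mem_pi] at hU
  obtain ⟨I, hI, V, hV, hIV⟩ := hU
  obtain ⟨s, hs⟩ := IsMaximalChar.exists_princhar_eqOn hχ hI
  exact ⟨princhar s, hIV fun Z hZ => (hs Z hZ).symm ▸ mem_of_mem_nhds (hV Z),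
    Set.mem_range_self s⟩

end Characters

section BasicOpen

variable [Mul M] {ι : Type*}

/-- The set `U` of the statement is `Omega M ∩ basicOpen X Xi`. -/
def basicOpen (X : CIdeal M) (Xi : ι → CIdeal M) : Set (CharSpace M) :=
  {η | η X = true ∧ ∀ i, η (Xi i) = false}

lemma isOpen_basicOpen [Finite ι] (X : CIdeal M) (Xi : ι → CIdeal M) :
    IsOpen (basicOpen X Xi) := by
  rw [basicOpen, Set.ofPred_and, Set.ofPred_forall]
  exact ((isOpen_discrete {true}).preimage (continuous_apply X)).inter
    (isOpen_iInter_of_finite fun i => (isOpen_discrete {false}).preimage (continuous_apply (Xi i)))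

variable [IsLeftCancelMul M] {X : CIdeal M} {Xi : ι → CIdeal M}

lemma exists_omegaMax_mem_basicOpen {Y : CIdeal M} (hYne : Y.1.Nonempty) (hYX : Y.1 ⊆ X.1)
    (hYXi : ∀ i, Y.1 ∩ (Xi i).1 = ∅) : ∃ χ ∈ OmegaMax M, χ ∈ basicOpen X Xi := by
  obtain ⟨F, hYF, hF⟩ := (isFilterOn_principal hYne).exists_maximal
  have hY : Y ∈ F := hYF (show Y.1 ⊆ Y.1 from subset_rfl)
  refine ⟨filterChar F, isMaximalChar_filterChar hF, decide_eq_true (hYF hYX),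
    fun i => decide_eq_false fun hXi => ?_⟩
  have hne := hF.1.2.1 _ (hF.1.inter_mem hY hXi)
  exact hne.ne_empty (hYXi i)

lemma disjoint_omegaMax_basicOpen [Finite ι] (hX : IsFoundation X.1 (fun i => (Xi i).1)) :
    Disjoint (OmegaMax M) (basicOpen X Xi) := by
  rw [Set.disjoint_left]
  rintro χ hχ ⟨hχX, hχXi⟩
  have hF := IsMaximalChar.maximal hχ
  choose W hWF hW using fun i =>
    exists_mem_inter_eq_empty_of_notMem hF (Z := Xi i) (by simp [hχXi i])
  obtain ⟨V, hVF, hVX, hVW⟩ := hF.1.exists_subset_of_finite hχX W hWF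
  obtain ⟨i, t, htV, htXi⟩ := hX.2 V.1 V.2 (hF.1.2.1 V hVF) hVX
  exact (hW i).subset ⟨hVW i htV, htXi⟩

end BasicOpen

theorem cstar_stmt1_general {M : Type*} [Monoid M] [IsLeftCancelMul M]
    (m : ℕ) (X : CIdeal M) (Xi : Fin m → CIdeal M)
    (hsub : ∀ i, (Xi i).1 ⊆ X.1) :
    Disjoint {η | η ∈ Omega M ∧ η X = true ∧ ∀ i, η (Xi i) = false}
      (BoundaryOmega M)
    ↔ IsFoundation X.1 (fun i => (Xi i).1) := by
  change Disjoint (Omega M ∩ basicOpen X Xi) _ ↔ _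
  constructor
  · intro hdisj
    refine ⟨hsub, fun Y hY hYne hYX => ?_⟩
    by_contra! hmiss
    obtain ⟨χ, hχ, hχU⟩ := exists_omegaMax_mem_basicOpen (Y := ⟨Y, hY⟩) hYne hYX hmiss
    exact Set.disjoint_left.mp hdisj ⟨omegaMax_subset_omega hχ, hχU⟩ (subset_closure hχ)
  · intro hfound
    exact ((disjoint_omegaMax_basicOpen hfound).closure_left
      (isOpen_basicOpen X Xi)).symm.mono_left Set.inter_subset_right

/-- For constructible right ideals `X₁, …, Xₘ ⊆ X` (`m ≥ 1`) of a left
cancellative monoid, the set `U = {η ∈ Ω(S) : η(X) = 1, η(Xᵢ) = 0 for all i}` is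
disjoint from `∂Ω(S)` if and only if `{X₁, …, Xₘ}` is a foundation set for `X`. -/
theorem cstar_stmt1 {M : Type*} [Monoid M] [IsLeftCancelMul M]
    (m : ℕ) (hm : 1 ≤ m) (X : CIdeal M) (Xi : Fin m → CIdeal M)
    (hsub : ∀ i, (Xi i).1 ⊆ X.1) :
    Disjoint {η | η ∈ Omega M ∧ η X = true ∧ ∀ i, η (Xi i) = false}
      (BoundaryOmega M)
    ↔ IsFoundation X.1 (fun i => (Xi i).1) :=
  cstar_stmt1_general m X Xi hsub

end SgC
end
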